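/- Let (B^{(n)})_{n∈ℕ} be a sequence of semi-infinite matrices and b∈ℕ such that B^{(n)}_{rs}=0 whenever |r−s|>b, for all n. Suppose B^R is a right limit of (B^{(n)}) along a subsequence (n_j). Then for every M∈ℕ and every m=2,…,M, lim_{j→∞} C_m^{(n_j)}(B^{(n_j)}) = D_m((B^R)_{bM}), where (B^R)_{bM} is the truncation of B^R to the block {−bM,…,bM}². -/

import Mathlib

noncomputable section

/-- Entrywise product of semi-infinite matrices (finite sums in the banded case). -/
def matMul (A B : ℕ → ℕ → ℝ) : ℕ → ℕ → ℝ := fun r s => ∑' k, A r k * B k s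

/-- Powers of a semi-infinite matrix. -/
def matPow (A : ℕ → ℕ → ℝ) : ℕ → ℕ → ℕ → ℝ
  | 0 => fun r s => if r = s then 1 else 0
  | m + 1 => matMul A (matPow A m)

/-- The coordinate projection `P_n` as a semi-infinite matrix. -/
def projMat (n : ℕ) : ℕ → ℕ → ℝ := fun r s => if r = s ∧ r < n then 1 else 0

/-- The matrix chain `B^{l_1} P_n B^{l_2} P_n ⋯ P_n B^{l_j}` for a list `[l_1, …, l_j]`. -/
def chainMat (B : ℕ → ℕ → ℝ) (n : ℕ) : List ℕ → (ℕ → ℕ → ℝ)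
  | [] => fun r s => if r = s then 1 else 0
  | [l] => matPow B l
  | l :: ls => matMul (matPow B l) (matMul (projMat n) (chainMat B n ls))

/-- `Tr(B^{l_1} P_n ⋯ B^{l_j} P_n) = ∑_{k<n} ⟨e_k, B^{l_1} P_n ⋯ B^{l_j} e_k⟩`. -/
def trChain (B : ℕ → ℕ → ℝ) (n : ℕ) (l : List ℕ) : ℝ :=
  ∑ k ∈ Finset.range n, chainMat B n l k k

/-- Compositions of `m` into `j` positive parts. -/
def comps (j m : ℕ) : Finset (Fin j → ℕ) :=
  Finset.filter (fun l => (∀ i, 1 ≤ l i) ∧ ∑ i, l i = m)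
    (Fintype.piFinset fun _ => Finset.range (m + 1))

/-- The quantity `C_m^{(n)}(B)` (with the `Tr B^m P_n` subtraction and `j` starting at `2`). -/
def Cmn (B : ℕ → ℕ → ℝ) (n m : ℕ) : ℝ :=
  ∑ j ∈ Finset.Icc 2 m, ((-1 : ℝ) ^ j / j) *
    ∑ l ∈ comps j m,
      (trChain B n (List.ofFn l) - trChain B n [m]) / ((∏ i, Nat.factorial (l i) : ℕ) : ℝ)

/-- Entrywise product of two-sided matrices. -/
def zmatMul (A B : ℤ → ℤ → ℝ) : ℤ → ℤ → ℝ := fun r s => ∑' k, A r k * B k s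

/-- Powers of a two-sided matrix. -/
def zmatPow (A : ℤ → ℤ → ℝ) : ℕ → ℤ → ℤ → ℝ
  | 0 => fun r s => if r = s then 1 else 0
  | m + 1 => zmatMul A (zmatPow A m)

/-- The projection `P_-` of `ℓ²(ℤ)` onto the coordinates indexed by `r < 0`, as a matrix. -/
def projMinus : ℤ → ℤ → ℝ := fun r s => if r = s ∧ r < 0 then 1 else 0

/-- The block `P_- F^l P_-`. -/
def dblock (F : ℤ → ℤ → ℝ) (l : ℕ) : ℤ → ℤ → ℝ :=
  zmatMul projMinus (zmatMul (zmatPow F l) projMinus)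

/-- The chain `P_- F^{l_1} P_- · P_- F^{l_2} P_- ⋯ P_- F^{l_j} P_-`. -/
def dchain (F : ℤ → ℤ → ℝ) : List ℕ → (ℤ → ℤ → ℝ)
  | [] => fun r s => if r = s then 1 else 0
  | l :: ls => zmatMul (dblock F l) (dchain F ls)

/-- The trace of such a chain (a finite sum for finitely supported `F` and positive `l_i`). -/
def trD (F : ℤ → ℤ → ℝ) (l : List ℕ) : ℝ := ∑' k : ℤ, dchain F l k k

/-- The quantity `D_m(F)`. -/
def DmZ (F : ℤ → ℤ → ℝ) (m : ℕ) : ℝ :=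
  ∑ j ∈ Finset.Icc 1 m, ((-1 : ℝ) ^ j / j) *
    ∑ l ∈ comps j m,
      (trD F (List.ofFn l) - trD F [m]) / ((∏ i, Nat.factorial (l i) : ℕ) : ℝ)

/-- The truncation `F_M` of a two-sided matrix to the block `{-M,…,M}²`. -/
def ztrunc (F : ℤ → ℤ → ℝ) (M : ℕ) : ℤ → ℤ → ℝ :=
  fun r s => if |r| ≤ (M : ℤ) ∧ |s| ≤ (M : ℤ) then F r s else 0

/-!
Because `B^{(n)}` has bandwidth `b`, inserting the projections `P_n` into `B^m` only changes the
contributions of paths that reach an index `≥ n`, and in a trace over `k < n` such paths stay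
within distance `bm` of `n`. So once `n ≥ bM`, each difference
`Tr(B^{l_1} P_n ⋯ B^{l_j} P_n) - Tr(B^m P_n)` is unchanged when `B^{(n)}` is replaced by its block
on `[n - bM, n + bM]²`; recentring that block at `0` turns `P_n` into `P_-` and the difference into
the corresponding one in `D_m`, whose `j = 1` term vanishes. Along the right limit these blocks
converge entrywise to `(B^R)_{bM}`, and on matrices supported in a fixed box `D_m` is a polynomial
in finitely many entries.
-/

open Filter Topology Finset

def BoxSupported (N : ℕ) (F : ℤ → ℤ → ℝ) : Prop :=
  ∀ r s : ℤ, ¬(|r| ≤ (N : ℤ) ∧ |s| ≤ (N : ℤ)) → F r s = 0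

def IsBanded (b : ℕ) (A : ℕ → ℕ → ℝ) : Prop :=
  ∀ r s : ℕ, (b : ℤ) < |(r : ℤ) - (s : ℤ)| → A r s = 0

/-- `Int.toNat` clips indices below `-n`; this matrix is only read inside a truncation to
`|r|, |s| ≤ N ≤ n`, where no clipping occurs. -/
def shiftedAt (A : ℕ → ℕ → ℝ) (n : ℕ) : ℤ → ℤ → ℝ :=
  fun r s => A ((n : ℤ) + r).toNat ((n : ℤ) + s).toNat

def placedAt (F : ℤ → ℤ → ℝ) (n : ℕ) : ℕ → ℕ → ℝ :=
  fun x y => F ((x : ℤ) - n) ((y : ℤ) - n)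

theorem tendsto_tsum_of_eq_zero_off {ι α M : Type*} [AddCommMonoid M] [TopologicalSpace M]
    [ContinuousAdd M] {p : Filter α} {f : α → ι → M} {g : ι → M} (S : Finset ι)
    (hf : ∀ a, ∀ i ∉ S, f a i = 0) (hg : ∀ i ∉ S, g i = 0)
    (h : ∀ i, Tendsto (fun a => f a i) p (𝓝 (g i))) :
    Tendsto (fun a => ∑' i, f a i) p (𝓝 (∑' i, g i)) := by
  have hfS : (fun a => ∑' i, f a i) = fun a => ∑ i ∈ S, f a i :=
    funext fun a => tsum_eq_sum (hf a)
  rw [hfS, tsum_eq_sum hg]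
  exact tendsto_finsetSum S fun i _ => h i

theorem tsum_int_eq_tsum_natCast_sub {M : Type*} [AddCommMonoid M] [TopologicalSpace M]
    {f : ℤ → M} (n : ℕ) (hf : ∀ q, f q ≠ 0 → -(n : ℤ) ≤ q) :
    ∑' q, f q = ∑' k : ℕ, f ((k : ℤ) - n) :=
  (Function.Injective.tsum_eq (g := fun k : ℕ => (k : ℤ) - n) (fun _ _ h => by simpa using h)
    fun q hq => ⟨(q + n).toNat, by have := hf q hq; dsimp only; omega⟩).symm

theorem one_le_and_sum_ofFn_of_mem_comps {j m : ℕ} {l : Fin j → ℕ} (hl : l ∈ comps j m) :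
    (∀ x ∈ List.ofFn l, 1 ≤ x) ∧ (List.ofFn l).sum = m := by
  obtain ⟨-, hpos, hsum⟩ := mem_filter.mp hl
  refine ⟨fun x hx => ?_, by rw [List.sum_ofFn, hsum]⟩
  obtain ⟨i, rfl⟩ := List.mem_ofFn.mp hx
  exact hpos i

section TwoSided

variable {N : ℕ} {F : ℤ → ℤ → ℝ}

theorem BoxSupported.abs_le_of_ne_zero (hF : BoxSupported N F) {r s : ℤ} (h : F r s ≠ 0) :
    |r| ≤ N ∧ |s| ≤ N :=
  not_not.mp fun hrs => h (hF r s hrs)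

theorem ztrunc_boxSupported (F : ℤ → ℤ → ℝ) (N : ℕ) : BoxSupported N (ztrunc F N) :=
  fun _ _ h => if_neg h

theorem tendsto_ztrunc {α : Type*} {p : Filter α} {G : α → ℤ → ℤ → ℝ}
    (hGF : ∀ r s, Tendsto (fun a => G a r s) p (𝓝 (F r s))) (N : ℕ) (r s : ℤ) :
    Tendsto (fun a => ztrunc (G a) N r s) p (𝓝 (ztrunc F N r s)) := by
  unfold ztrunc
  split_ifs
  · exact hGF r s
  · exact tendsto_const_nhds

theorem zmatMul_projMinus_apply (X : ℤ → ℤ → ℝ) (r s : ℤ) :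
    zmatMul X projMinus r s = if s < 0 then X r s else 0 := by
  unfold zmatMul projMinus
  rw [tsum_eq_single s fun k hk => by simp [hk]]
  split_ifs <;> simp_all

theorem projMinus_zmatMul_apply (X : ℤ → ℤ → ℝ) (r s : ℤ) :
    zmatMul projMinus X r s = if r < 0 then X r s else 0 := by
  unfold zmatMul projMinus
  rw [tsum_eq_single r fun k hk => by simp [Ne.symm hk]]
  split_ifs <;> simp_all

theorem dblock_apply (F : ℤ → ℤ → ℝ) (l : ℕ) (r s : ℤ) :
    dblock F l r s = if r < 0 ∧ s < 0 then zmatPow F l r s else 0 := by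
  rw [dblock, projMinus_zmatMul_apply, zmatMul_projMinus_apply]
  by_cases hr : r < 0 <;> by_cases hs : s < 0 <;> simp [hr, hs]

theorem dchain_singleton (F : ℤ → ℤ → ℝ) (l : ℕ) (r s : ℤ) :
    dchain F [l] r s = dblock F l r s := by
  show ∑' k, dblock F l r k * (if k = s then 1 else 0) = _
  rw [tsum_eq_single s fun k hk => by simp [hk]]
  simp

theorem boxSupported_zmatPow (hF : BoxSupported N F) {l : ℕ} (hl : 1 ≤ l) :
    BoxSupported N (zmatPow F l) := by
  induction l with
  | zero => omega
  | succ l ih =>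
    intro r s hrs
    show ∑' k, F r k * zmatPow F l k s = 0
    refine (tsum_congr fun k => ?_).trans tsum_zero
    rcases not_and_or.mp hrs with hr | hs
    · rw [hF r k fun h => hr h.1, zero_mul]
    rcases Nat.eq_zero_or_pos l with rfl | hl
    · by_cases hk : k = s
      · rw [hk, hF r s fun h => hs h.2, zero_mul]
      · simp [zmatPow, hk]
    · rw [ih hl k s fun h => hs h.2, mul_zero]

theorem boxSupported_dblock (hF : BoxSupported N F) {l : ℕ} (hl : 1 ≤ l) :
    BoxSupported N (dblock F l) := fun r s hrs => by
  rw [dblock_apply, boxSupported_zmatPow hF hl r s hrs, ite_self]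

theorem BoxSupported.dchain_cons_eq_zero (hF : BoxSupported N F) {l : ℕ} (hl : 1 ≤ l)
    (ls : List ℕ) {r : ℤ} (hr : ¬(-(N : ℤ) ≤ r ∧ r < 0)) (s : ℤ) :
    dchain F (l :: ls) r s = 0 := by
  show ∑' k, dblock F l r k * dchain F ls k s = 0
  refine (tsum_congr fun k => ?_).trans tsum_zero
  rw [dblock_apply]
  split_ifs with h
  · rw [boxSupported_zmatPow hF hl r k fun h' => hr ⟨(abs_le.mp h'.1).1, h.1⟩, zero_mul]
  · rw [zero_mul]

theorem not_abs_le_of_notMem_Icc {k : ℤ} (hk : k ∉ Icc (-(N : ℤ)) N) : ¬|k| ≤ N :=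
  fun h => hk (mem_Icc.mpr (abs_le.mp h))

section Continuity

variable {α : Type*} {p : Filter α} {G : α → ℤ → ℤ → ℝ}

theorem tendsto_zmatPow (hG : ∀ a, BoxSupported N (G a)) (hF : BoxSupported N F)
    (hGF : ∀ r s, Tendsto (fun a => G a r s) p (𝓝 (F r s))) (l : ℕ) (r s : ℤ) :
    Tendsto (fun a => zmatPow (G a) l r s) p (𝓝 (zmatPow F l r s)) := by
  induction l generalizing r with
  | zero => exact tendsto_const_nhds
  | succ l ih =>
    show Tendsto (fun a => ∑' k, G a r k * zmatPow (G a) l k s) p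
      (𝓝 (∑' k, F r k * zmatPow F l k s))
    refine tendsto_tsum_of_eq_zero_off (Icc (-(N : ℤ)) N) (fun a k hk => ?_) (fun k hk => ?_)
      fun k => (hGF r k).mul (ih k)
    · rw [hG a r k fun h => not_abs_le_of_notMem_Icc hk h.2, zero_mul]
    · rw [hF r k fun h => not_abs_le_of_notMem_Icc hk h.2, zero_mul]

theorem tendsto_dblock (hG : ∀ a, BoxSupported N (G a)) (hF : BoxSupported N F)
    (hGF : ∀ r s, Tendsto (fun a => G a r s) p (𝓝 (F r s))) (l : ℕ) (r s : ℤ) :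
    Tendsto (fun a => dblock (G a) l r s) p (𝓝 (dblock F l r s)) := by
  simp only [dblock_apply]
  split_ifs
  · exact tendsto_zmatPow hG hF hGF l r s
  · exact tendsto_const_nhds

theorem tendsto_dchain (hG : ∀ a, BoxSupported N (G a)) (hF : BoxSupported N F)
    (hGF : ∀ r s, Tendsto (fun a => G a r s) p (𝓝 (F r s))) (ls : List ℕ)
    (hls : ∀ x ∈ ls, 1 ≤ x) (r s : ℤ) :
    Tendsto (fun a => dchain (G a) ls r s) p (𝓝 (dchain F ls r s)) := by
  induction ls generalizing r with
  | nil => exact tendsto_const_nhds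
  | cons l ls ih =>
    have hl : 1 ≤ l := hls l List.mem_cons_self
    show Tendsto (fun a => ∑' k, dblock (G a) l r k * dchain (G a) ls k s) p
      (𝓝 (∑' k, dblock F l r k * dchain F ls k s))
    refine tendsto_tsum_of_eq_zero_off (Icc (-(N : ℤ)) N) (fun a k hk => ?_) (fun k hk => ?_)
      fun k => (tendsto_dblock hG hF hGF l r k).mul
        (ih (fun x hx => hls x (List.mem_cons_of_mem l hx)) k)
    · rw [boxSupported_dblock (hG a) hl r k fun h => not_abs_le_of_notMem_Icc hk h.2, zero_mul]
    · rw [boxSupported_dblock hF hl r k fun h => not_abs_le_of_notMem_Icc hk h.2, zero_mul]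

theorem tendsto_trD (hG : ∀ a, BoxSupported N (G a)) (hF : BoxSupported N F)
    (hGF : ∀ r s, Tendsto (fun a => G a r s) p (𝓝 (F r s))) (ls : List ℕ)
    (hls : ∀ x ∈ ls, 1 ≤ x) :
    Tendsto (fun a => trD (G a) ls) p (𝓝 (trD F ls)) := by
  cases ls with
  | nil => exact tendsto_const_nhds
  | cons l ls =>
    have hl : 1 ≤ l := hls l List.mem_cons_self
    have hout : ∀ k ∉ Icc (-(N : ℤ)) N, ¬(-(N : ℤ) ≤ k ∧ k < 0) := fun k hk h =>
      hk (mem_Icc.mpr ⟨h.1, by omega⟩)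
    exact tendsto_tsum_of_eq_zero_off (Icc (-(N : ℤ)) N)
      (fun a k hk => (hG a).dchain_cons_eq_zero hl ls (hout k hk) k)
      (fun k hk => hF.dchain_cons_eq_zero hl ls (hout k hk) k)
      fun k => tendsto_dchain hG hF hGF _ hls k k

theorem tendsto_dmZ (hG : ∀ a, BoxSupported N (G a)) (hF : BoxSupported N F)
    (hGF : ∀ r s, Tendsto (fun a => G a r s) p (𝓝 (F r s))) (m : ℕ) :
    Tendsto (fun a => DmZ (G a) m) p (𝓝 (DmZ F m)) := by
  refine tendsto_finsetSum _ fun j hj => (tendsto_finsetSum _ fun l hl => ?_).const_mul _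
  have hm : ∀ x ∈ [m], 1 ≤ x := by
    simpa using (mem_Icc.mp hj).1.trans (mem_Icc.mp hj).2
  exact ((tendsto_trD hG hF hGF _ (one_le_and_sum_ofFn_of_mem_comps hl).1).sub
    (tendsto_trD hG hF hGF _ hm)).div_const _

end Continuity

end TwoSided

section SemiInfinite

variable {b : ℕ} {A A' : ℕ → ℕ → ℝ}

theorem IsBanded.apply_eq_zero (hA : IsBanded b A) {r s : ℕ} (h : r + b < s ∨ s + b < r) :
    A r s = 0 :=
  hA r s (lt_abs.mpr (by omega))

theorem projMat_matMul_apply (n : ℕ) (X : ℕ → ℕ → ℝ) (r s : ℕ) :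
    matMul (projMat n) X r s = if r < n then X r s else 0 := by
  unfold matMul projMat
  rw [tsum_eq_single r fun k hk => by simp [Ne.symm hk]]
  split_ifs <;> simp_all

theorem matPow_zero_matMul (A X : ℕ → ℕ → ℝ) : matMul (matPow A 0) X = X := by
  funext r s
  show ∑' k, (if r = k then (1 : ℝ) else 0) * X k s = X r s
  rw [tsum_eq_single r fun k hk => by simp [Ne.symm hk]]
  simp

theorem IsBanded.matMul_apply (hA : IsBanded b A) (X : ℕ → ℕ → ℝ) (r s : ℕ) :
    matMul A X r s = ∑ k ∈ range (r + b + 1), A r k * X k s :=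
  tsum_eq_sum fun k hk => by
    rw [hA.apply_eq_zero (Or.inl (by simp only [mem_range] at hk; omega)), zero_mul]

theorem isBanded_matMul {a : ℕ} {X : ℕ → ℕ → ℝ} (hA : IsBanded a A) (hX : IsBanded b X) :
    IsBanded (a + b) (matMul A X) := fun r s hrs => by
  refine (tsum_congr fun k => ?_).trans tsum_zero
  rcases lt_abs.mp hrs with h | h
  · by_cases hk : k + a < r
    · rw [hA.apply_eq_zero (Or.inr hk), zero_mul]
    · rw [hX.apply_eq_zero (Or.inr (by omega)), mul_zero]
  · by_cases hk : r + a < k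
    · rw [hA.apply_eq_zero (Or.inl hk), zero_mul]
    · rw [hX.apply_eq_zero (Or.inl (by omega)), mul_zero]

theorem isBanded_matPow (hA : IsBanded b A) (l : ℕ) : IsBanded (b * l) (matPow A l) := by
  induction l with
  | zero =>
    intro r s hrs
    have : r ≠ s := by rintro rfl; simp at hrs
    simp [matPow, this]
  | succ l ih =>
    rw [Nat.mul_succ, add_comm]
    exact isBanded_matMul hA ih

theorem matMul_assoc_of_isBanded {a : ℕ} {X Y : ℕ → ℕ → ℝ} (hA : IsBanded a A)
    (hX : IsBanded b X) : matMul A (matMul X Y) = matMul (matMul A X) Y := by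
  funext r s
  rw [hA.matMul_apply, (isBanded_matMul hA hX).matMul_apply]
  simp_rw [hX.matMul_apply, hA.matMul_apply, mul_sum, sum_mul]
  have hwiden : ∀ k ∈ range (r + a + 1), ∑ q ∈ range (k + b + 1), A r k * (X k q * Y q s)
      = ∑ q ∈ range (r + (a + b) + 1), A r k * (X k q * Y q s) := fun k hk =>
    sum_subset (range_subset_range.mpr (by simp only [mem_range] at hk; omega))
      fun q _ hq => by
        rw [hX.apply_eq_zero (Or.inl (by simp only [mem_range] at hq; omega)), zero_mul,
          mul_zero]
  rw [sum_congr rfl hwiden, sum_comm]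
  exact sum_congr rfl fun q _ => sum_congr rfl fun k _ => (mul_assoc _ _ _).symm

theorem IsBanded.matPow_add (hA : IsBanded b A) (l c : ℕ) :
    matPow A (l + c) = matMul (matPow A l) (matPow A c) := by
  induction l with
  | zero => rw [zero_add, matPow_zero_matMul]
  | succ l ih =>
    rw [add_right_comm]
    show matMul A (matPow A (l + c)) = matMul (matMul A (matPow A l)) (matPow A c)
    rw [ih, matMul_assoc_of_isBanded hA (isBanded_matPow hA l)]

theorem chainMat_cons_of_ne_nil (A : ℕ → ℕ → ℝ) (n l : ℕ) {ls : List ℕ} (hls : ls ≠ []) :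
    chainMat A n (l :: ls) = matMul (matPow A l) (matMul (projMat n) (chainMat A n ls)) := by
  obtain ⟨l', ls', rfl⟩ := List.exists_cons_of_ne_nil hls
  rfl

theorem IsBanded.chainMat_cons_sub_matPow (hA : IsBanded b A) (n l : ℕ) {ls : List ℕ}
    (hls : ls ≠ []) (r s : ℕ) :
    chainMat A n (l :: ls) r s - matPow A (l :: ls).sum r s =
      ∑ k ∈ range (r + b * l + 1), matPow A l r k *
        ((if k < n then chainMat A n ls k s else 0) - matPow A ls.sum k s) := by
  rw [chainMat_cons_of_ne_nil A n l hls, List.sum_cons, hA.matPow_add,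
    (isBanded_matPow hA l).matMul_apply, (isBanded_matPow hA l).matMul_apply,
    ← sum_sub_distrib]
  simp_rw [projMat_matMul_apply, mul_sub]

theorem IsBanded.chainMat_eq_matPow (hA : IsBanded b A) {n : ℕ} (ls : List ℕ) {r : ℕ}
    (hr : r + b * ls.sum < n) (s : ℕ) : chainMat A n ls r s = matPow A ls.sum r s := by
  induction ls generalizing r with
  | nil => rfl
  | cons l ls ih =>
    rcases eq_or_ne ls [] with rfl | hls
    · simp [chainMat]
    rw [← sub_eq_zero, hA.chainMat_cons_sub_matPow n l hls]
    refine sum_eq_zero fun k hk => ?_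
    rw [List.sum_cons, mul_add] at hr
    rw [mem_range] at hk
    rw [if_pos (by omega), ih (by omega), sub_self, mul_zero]

theorem IsBanded.matPow_eq_of_eqOn (hA : IsBanded b A) (hA' : IsBanded b A') {c d : ℤ}
    (hAA' : ∀ x y : ℕ, c ≤ x → x ≤ d → c ≤ y → y ≤ d → A x y = A' x y) (l : ℕ) {r s : ℕ}
    (hc : c + (b * l : ℕ) ≤ max (r : ℤ) s) (hd : min (r : ℤ) s + (b * l : ℕ) ≤ d) :
    matPow A l r s = matPow A' l r s := by
  -- `hc` and `hd` confine every `l`-step path of bandwidth `b` from `r` to `s` to `[c, d]`.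
  induction l generalizing r with
  | zero => rfl
  | succ l ih =>
    show matMul A (matPow A l) r s = matMul A' (matPow A' l) r s
    rw [hA.matMul_apply, hA'.matMul_apply]
    refine sum_congr rfl fun k _ => ?_
    by_cases hrk : r + b < k ∨ k + b < r
    · rw [hA.apply_eq_zero hrk, hA'.apply_eq_zero hrk, zero_mul, zero_mul]
    by_cases hks : k + b * l < s ∨ s + b * l < k
    · rw [(isBanded_matPow hA l).apply_eq_zero hks, (isBanded_matPow hA' l).apply_eq_zero hks,
        mul_zero, mul_zero]
    rw [Nat.mul_succ] at hc hd
    rw [hAA' r k (by omega) (by omega) (by omega) (by omega), ih (by omega) (by omega)]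

theorem IsBanded.chainMat_sub_matPow_eq_of_eqOn (hA : IsBanded b A) (hA' : IsBanded b A')
    {c d : ℤ} (hAA' : ∀ x y : ℕ, c ≤ x → x ≤ d → c ≤ y → y ≤ d → A x y = A' x y) {n : ℕ}
    (ls : List ℕ) (hc : c + (b * ls.sum : ℕ) ≤ n) (hd : (n : ℤ) + (b * ls.sum : ℕ) ≤ d)
    {r : ℕ} (hr : r < n) (s : ℕ) :
    chainMat A n ls r s - matPow A ls.sum r s = chainMat A' n ls r s - matPow A' ls.sum r s := by
  induction ls generalizing r with
  | nil => rfl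
  | cons l ls ih =>
    rcases eq_or_ne ls [] with rfl | hls
    · simp [chainMat]
    rw [hA.chainMat_cons_sub_matPow n l hls, hA'.chainMat_cons_sub_matPow n l hls]
    refine sum_congr rfl fun k hk => ?_
    rw [mem_range] at hk
    rw [List.sum_cons, mul_add] at hc hd
    by_cases hkn : k + b * ls.sum < n
    · rw [if_pos (by omega), if_pos (by omega), hA.chainMat_eq_matPow ls hkn,
        hA'.chainMat_eq_matPow ls hkn, sub_self, sub_self, mul_zero, mul_zero]
    rw [hA.matPow_eq_of_eqOn hA' hAA' l (by omega) (by omega)]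
    by_cases hkn' : k < n
    · rw [if_pos hkn', if_pos hkn', ih (by omega) (by omega) hkn']
    · rw [if_neg hkn', if_neg hkn',
        hA.matPow_eq_of_eqOn hA' hAA' ls.sum (by omega) (by omega)]

theorem IsBanded.trChain_sub_eq_of_eqOn (hA : IsBanded b A) (hA' : IsBanded b A') {c d : ℤ}
    (hAA' : ∀ x y : ℕ, c ≤ x → x ≤ d → c ≤ y → y ≤ d → A x y = A' x y) {n : ℕ}
    (ls : List ℕ) (hc : c + (b * ls.sum : ℕ) ≤ n) (hd : (n : ℤ) + (b * ls.sum : ℕ) ≤ d) :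
    trChain A n ls - trChain A n [ls.sum] = trChain A' n ls - trChain A' n [ls.sum] := by
  simp only [trChain, ← sum_sub_distrib]
  exact sum_congr rfl fun k hk =>
    hA.chainMat_sub_matPow_eq_of_eqOn hA' hAA' ls hc hd (mem_range.mp hk) k

end SemiInfinite

section Window

variable {N n : ℕ} {F : ℤ → ℤ → ℝ}

theorem BoxSupported.matPow_placedAt (hF : BoxSupported N F) (hNn : N ≤ n) (l : ℕ) (r s : ℕ) :
    matPow (placedAt F n) l r s = zmatPow F l ((r : ℤ) - n) ((s : ℤ) - n) := by
  induction l generalizing r with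
  | zero => simp [matPow, zmatPow]
  | succ l ih =>
    show ∑' k : ℕ, F ((r : ℤ) - n) ((k : ℤ) - n) * matPow (placedAt F n) l k s =
      ∑' q, F ((r : ℤ) - n) q * zmatPow F l q ((s : ℤ) - n)
    simp_rw [ih]
    rw [tsum_int_eq_tsum_natCast_sub n fun q hq => ?_]
    have := (abs_le.mp (hF.abs_le_of_ne_zero (left_ne_zero_of_mul hq)).2).1
    omega

theorem BoxSupported.chainMat_placedAt (hF : BoxSupported N F) (hNn : N ≤ n) (ls : List ℕ)
    (hls : ∀ x ∈ ls, 1 ≤ x) {r s : ℕ} (hr : r < n) (hs : s < n) :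
    chainMat (placedAt F n) n ls r s = dchain F ls ((r : ℤ) - n) ((s : ℤ) - n) := by
  induction ls generalizing r with
  | nil => simp [chainMat, dchain]
  | cons l ls ih =>
    have hl : 1 ≤ l := hls l List.mem_cons_self
    rcases eq_or_ne ls [] with rfl | hne
    · rw [chainMat, hF.matPow_placedAt hNn, dchain_singleton, dblock_apply,
        if_pos ⟨by omega, by omega⟩]
    rw [chainMat_cons_of_ne_nil _ n l hne]
    show ∑' k : ℕ, matPow (placedAt F n) l r k *
        matMul (projMat n) (chainMat (placedAt F n) n ls) k s =
      ∑' q, dblock F l ((r : ℤ) - n) q * dchain F ls q ((s : ℤ) - n)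
    have hterm : ∀ k : ℕ, matPow (placedAt F n) l r k * matMul (projMat n)
        (chainMat (placedAt F n) n ls) k s =
          dblock F l ((r : ℤ) - n) ((k : ℤ) - n) * dchain F ls ((k : ℤ) - n) ((s : ℤ) - n) := by
      intro k
      rw [projMat_matMul_apply, dblock_apply]
      by_cases hk : k < n
      · rw [if_pos hk, if_pos ⟨by omega, by omega⟩, hF.matPow_placedAt hNn,
          ih (fun x hx => hls x (List.mem_cons_of_mem l hx)) hk]
      · rw [if_neg hk, if_neg (by omega), mul_zero, zero_mul]
    simp_rw [hterm]
    rw [tsum_int_eq_tsum_natCast_sub n fun q hq => ?_]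
    have := (abs_le.mp ((boxSupported_dblock hF hl).abs_le_of_ne_zero
      (left_ne_zero_of_mul hq)).2).1
    omega

theorem BoxSupported.trChain_placedAt (hF : BoxSupported N F) (hNn : N ≤ n) {ls : List ℕ}
    (hne : ls ≠ []) (hls : ∀ x ∈ ls, 1 ≤ x) : trChain (placedAt F n) n ls = trD F ls := by
  obtain ⟨l, ls, rfl⟩ := List.exists_cons_of_ne_nil hne
  have hl : 1 ≤ l := hls l List.mem_cons_self
  calc trChain (placedAt F n) n (l :: ls)
      = ∑ k ∈ range n, dchain F (l :: ls) ((k : ℤ) - n) ((k : ℤ) - n) :=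
        sum_congr rfl fun k hk =>
          hF.chainMat_placedAt hNn _ hls (mem_range.mp hk) (mem_range.mp hk)
    _ = ∑' k : ℕ, dchain F (l :: ls) ((k : ℤ) - n) ((k : ℤ) - n) :=
        (tsum_eq_sum fun k hk => hF.dchain_cons_eq_zero hl ls
          (by simp only [mem_range] at hk; omega) _).symm
    _ = trD F (l :: ls) :=
        (tsum_int_eq_tsum_natCast_sub n fun q hq => by
          by_contra h
          exact hq (hF.dchain_cons_eq_zero hl ls (r := q) (by omega) q)).symm

theorem placedAt_window_apply (A : ℕ → ℕ → ℝ) (n N x y : ℕ) :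
    placedAt (ztrunc (shiftedAt A n) N) n x y =
      if |(x : ℤ) - n| ≤ N ∧ |(y : ℤ) - n| ≤ N then A x y else 0 := by
  simp [placedAt, ztrunc, shiftedAt]

theorem IsBanded.trChain_sub_eq_trD_window {b : ℕ} {A : ℕ → ℕ → ℝ} (hA : IsBanded b A)
    {ls : List ℕ} (hne : ls ≠ []) (hls : ∀ x ∈ ls, 1 ≤ x) (hbN : b * ls.sum ≤ N)
    (hNn : N ≤ n) :
    trChain A n ls - trChain A n [ls.sum] =
      trD (ztrunc (shiftedAt A n) N) ls - trD (ztrunc (shiftedAt A n) N) [ls.sum] := by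
  have hF := ztrunc_boxSupported (shiftedAt A n) N
  have hbanded : IsBanded b (placedAt (ztrunc (shiftedAt A n) N) n) := fun x y hxy => by
    rw [placedAt_window_apply, hA x y hxy, ite_self]
  have hagree : ∀ x y : ℕ, (n : ℤ) - N ≤ x → x ≤ (n : ℤ) + N → (n : ℤ) - N ≤ y →
      y ≤ (n : ℤ) + N → A x y = placedAt (ztrunc (shiftedAt A n) N) n x y :=
    fun x y hx₁ hx₂ hy₁ hy₂ => by
      rw [placedAt_window_apply, if_pos ⟨abs_le.mpr ⟨by omega, by omega⟩,
        abs_le.mpr ⟨by omega, by omega⟩⟩]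
  have hsum : 1 ≤ ls.sum :=
    (hls _ (List.head_mem hne)).trans (List.le_sum_of_mem (List.head_mem hne))
  rw [hA.trChain_sub_eq_of_eqOn hbanded hagree ls (by omega) (by omega),
    hF.trChain_placedAt hNn hne hls,
    hF.trChain_placedAt hNn (List.cons_ne_nil _ _) (by simpa using hsum)]

theorem ofFn_eq_singleton_of_mem_comps_one {m : ℕ} {l : Fin 1 → ℕ} (hl : l ∈ comps 1 m) :
    List.ofFn l = [m] := by
  simpa using (one_le_and_sum_ofFn_of_mem_comps hl).2

theorem IsBanded.cmn_eq_dmZ_window {b m : ℕ} {A : ℕ → ℕ → ℝ} (hA : IsBanded b A)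
    (hbN : b * m ≤ N) (hNn : N ≤ n) : Cmn A n m = DmZ (ztrunc (shiftedAt A n) N) m := by
  unfold Cmn DmZ
  rw [← sum_subset (Icc_subset_Icc_left one_le_two) fun j hj hj' => ?_]
  · refine sum_congr rfl fun j hj => congrArg _ (sum_congr rfl fun l hl => ?_)
    obtain ⟨hls, hsum⟩ := one_le_and_sum_ofFn_of_mem_comps hl
    have hne : List.ofFn l ≠ [] := by
      rw [Ne, List.ofFn_eq_nil_iff]; have := (mem_Icc.mp hj).1; omega
    rw [← hsum, hA.trChain_sub_eq_trD_window hne hls (by rwa [hsum]) hNn]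
  · obtain rfl : j = 1 := by simp only [mem_Icc] at hj hj'; omega
    refine mul_eq_zero_of_right _ (sum_eq_zero fun l hl => ?_)
    rw [ofFn_eq_singleton_of_mem_comps_one hl, sub_self, zero_div]

end Window

theorem cumulants_tendsto_Dm_of_rightLimit_general
    (b : ℕ) (B : ℕ → ℕ → ℕ → ℝ)
    (hband : ∀ n r s : ℕ, (b : ℤ) < |(r : ℤ) - (s : ℤ)| → B n r s = 0)
    (BR : ℤ → ℤ → ℝ)
    (nseq : ℕ → ℕ) (hmono : StrictMono nseq)
    (hrightlim : ∀ r s : ℤ,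
      Filter.Tendsto (fun j => B (nseq j) ((nseq j : ℤ) + r).toNat ((nseq j : ℤ) + s).toNat)
        Filter.atTop (nhds (BR r s))) :
    ∀ M m : ℕ, 2 ≤ m → m ≤ M →
      Filter.Tendsto (fun j => Cmn (B (nseq j)) (nseq j) m)
        Filter.atTop (nhds (DmZ (ztrunc BR (b * M)) m)) := by
  intro M m _ hmM
  have hwindow : ∀ᶠ j in atTop, DmZ (ztrunc (shiftedAt (B (nseq j)) (nseq j)) (b * M)) m =
      Cmn (B (nseq j)) (nseq j) m :=
    (hmono.tendsto_atTop.eventually_ge_atTop (b * M)).mono fun j hj =>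
      (IsBanded.cmn_eq_dmZ_window (hband (nseq j)) (Nat.mul_le_mul_left b hmM) hj).symm
  exact (tendsto_dmZ (fun j => ztrunc_boxSupported _ _) (ztrunc_boxSupported BR _)
    (tendsto_ztrunc (G := fun j => shiftedAt (B (nseq j)) (nseq j)) hrightlim _) m).congr'
    hwindow

/-- Lemma: convergence of `C_m^{(n_j)}(B^{(n_j)})` to `D_m((B^R)_{bM})`
along a right limit. -/
theorem cumulants_tendsto_Dm_of_rightLimit
    (b : ℕ) (B : ℕ → ℕ → ℕ → ℝ)
    (hband : ∀ n r s : ℕ, (b : ℤ) < |(r : ℤ) - (s : ℤ)| → B n r s = 0)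
    (BR : ℤ → ℤ → ℝ) (hBRbdd : ∃ C : ℝ, ∀ r s : ℤ, |BR r s| ≤ C)
    (nseq : ℕ → ℕ) (hmono : StrictMono nseq)
    (hrightlim : ∀ r s : ℤ,
      Filter.Tendsto (fun j => B (nseq j) ((nseq j : ℤ) + r).toNat ((nseq j : ℤ) + s).toNat)
        Filter.atTop (nhds (BR r s))) :
    ∀ M m : ℕ, 2 ≤ m → m ≤ M →
      Filter.Tendsto (fun j => Cmn (B (nseq j)) (nseq j) m)
        Filter.atTop (nhds (DmZ (ztrunc BR (b * M)) m)) :=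
  cumulants_tendsto_Dm_of_rightLimit_general b B hband BR nseq hmono hrightlim

end
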